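/- Suppose p reducers are given q₁,…,q_p binary strings of length b respectively, with each qᵢ ≤ q and q ≥ 2, and every pair of strings at Hamming distance 1 appears together in at least one reducer's input set. Then (q₁ + ⋯ + q_p)/2^b ≥ b/log₂(q). -/

import Mathlib

/-!
Every pair of strings at Hamming distance 1 lies inside some reducer's set, so the `b * 2^b`
ordered such pairs of the cube are at most `∑ᵢ e(Rᵢ)`, where `e(S)` counts those inside `S`.
The edge-isoperimetric bound `e(S) ≤ |S| log₂ |S|` goes by induction on the dimension: splitting
`S` by its first bit into slices `A` and `B` gives `e(S) = e(A) + e(B) + 2 |A ∩ B|`, and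
`a log₂ a + c log₂ c + 2 min a c ≤ (a + c) log₂ (a + c)` because `log₂ (1 + x) ≥ x` on `[0, 1]`.
-/

open Finset Real

lemma hammingDist_cons {n : ℕ} {β : Type*} [DecidableEq β] (a c : β) (u v : Fin n → β) :
    hammingDist (Fin.cons a u : Fin (n + 1) → β) (Fin.cons c v) =
      (if a = c then 0 else 1) + hammingDist u v := by
  simp only [hammingDist, card_filter, Fin.sum_univ_succ, Fin.cons_zero, Fin.cons_succ, ne_eq,
    ite_not]

lemma Fintype.sum_pi_fin_succ {n : ℕ} {β M : Type*} [Fintype β] [AddCommMonoid M]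
    (f : (Fin (n + 1) → β) → M) : ∑ s, f s = ∑ a, ∑ u, f (Fin.cons a u) :=
  ((Fin.consEquiv fun _ => β).sum_comp f).symm.trans (Fintype.sum_prod_type _)

lemma le_logb_two_one_add {x : ℝ} (hx0 : 0 ≤ x) (hx1 : x ≤ 1) : x ≤ logb 2 (1 + x) := by
  rw [le_logb_iff_rpow_le one_lt_two (by linarith)]
  simpa [one_add_one_eq_two] using rpow_one_add_le_one_add_mul_self (s := 1) (by norm_num) hx0 hx1

lemma mul_logb_add_mul_logb_add_two_mul_min_le {a c : ℝ} (ha : 0 ≤ a) (hc : 0 ≤ c) :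
    a * logb 2 a + c * logb 2 c + 2 * min a c ≤ (a + c) * logb 2 (a + c) := by
  wlog hca : c ≤ a generalizing a c
  · have := this hc ha (by linarith)
    rwa [min_comm, add_comm c, add_comm (c * _)] at this
  rw [min_eq_right hca]
  rcases hc.eq_or_lt with rfl | hc
  · simp
  have ha : 0 < a := hc.trans_le hca
  have h_small : c * (1 + logb 2 c) ≤ c * logb 2 (a + c) := by
    rw [← logb_self_eq_one one_lt_two, ← logb_mul two_ne_zero hc.ne']
    gcongr
    · norm_num
    · linarith
  have h_large : a * logb 2 a + c ≤ a * logb 2 (a + c) := by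
    have := le_logb_two_one_add (div_nonneg hc.le ha.le) ((div_le_one ha).2 hca)
    rw [one_add_div ha.ne', logb_div (by positivity) ha.ne', le_sub_iff_add_le'] at this
    have := mul_le_mul_of_nonneg_left this ha.le
    rwa [mul_add, mul_div_cancel₀ _ ha.ne'] at this
  nlinarith

section Hypercube

variable {n : ℕ}

/-- Ordered pairs: each edge inside `S` is counted twice, hence no factor `1/2` in the bounds. -/
def hammingEdges (S : Finset (Fin n → Bool)) : Finset ((Fin n → Bool) × (Fin n → Bool)) :=
  {p | p.1 ∈ S ∧ p.2 ∈ S ∧ hammingDist p.1 p.2 = 1}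

def headSlice (S : Finset (Fin (n + 1) → Bool)) (a : Bool) : Finset (Fin n → Bool) :=
  {u | Fin.cons a u ∈ S}

lemma card_hammingEdges (S : Finset (Fin n → Bool)) :
    #(hammingEdges S) = ∑ u, ∑ v, if u ∈ S ∧ v ∈ S ∧ hammingDist u v = 1 then 1 else 0 := by
  rw [hammingEdges, card_filter, Fintype.sum_prod_type]

lemma card_eq_card_headSlice_add (S : Finset (Fin (n + 1) → Bool)) :
    #S = #(headSlice S false) + #(headSlice S true) := by
  conv_lhs => rw [← filter_univ_mem S]
  simp only [headSlice, card_filter, Fintype.sum_pi_fin_succ (fun s => if s ∈ S then 1 else 0),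
    Fintype.sum_bool]
  ring

@[simp]
lemma mem_headSlice {S : Finset (Fin (n + 1) → Bool)} {a : Bool} {u : Fin n → Bool} :
    u ∈ headSlice S a ↔ Fin.cons a u ∈ S := by
  simp [headSlice]

lemma Finset.sum_sum_boole_mem_mem_eq_card_inter {α : Type*} [Fintype α] [DecidableEq α]
    (A B : Finset α) :
    ∑ u, ∑ v, (if u ∈ A ∧ v ∈ B ∧ u = v then 1 else 0) = #(A ∩ B) := by
  simp [and_comm, ite_and]

lemma card_hammingEdges_succ (S : Finset (Fin (n + 1) → Bool)) :
    #(hammingEdges S) = #(hammingEdges (headSlice S false)) + #(hammingEdges (headSlice S true)) +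
      2 * #(headSlice S false ∩ headSlice S true) := by
  simp only [card_hammingEdges, Fintype.sum_pi_fin_succ, hammingDist_cons, ← mem_headSlice,
    Fintype.sum_bool, if_true, Bool.true_eq_false, Bool.false_eq_true, if_false, zero_add,
    add_eq_left, hammingDist_eq_zero, sum_add_distrib, Finset.sum_sum_boole_mem_mem_eq_card_inter]
  rw [inter_comm (headSlice S true)]
  ring

lemma hammingEdges_eq_empty (S : Finset (Fin 0 → Bool)) : hammingEdges S = ∅ := by
  ext e
  simp [hammingEdges, Subsingleton.elim e.1 e.2]

lemma natCast_mul_logb_natCast_nonneg (k : ℕ) : 0 ≤ (k : ℝ) * logb 2 k := by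
  rcases k.eq_zero_or_pos with rfl | hk
  · simp
  · exact mul_nonneg k.cast_nonneg (logb_nonneg one_lt_two (by exact_mod_cast hk))

theorem card_hammingEdges_le (S : Finset (Fin n → Bool)) :
    (#(hammingEdges S) : ℝ) ≤ #S * logb 2 #S := by
  induction n with
  | zero => simpa [hammingEdges_eq_empty] using natCast_mul_logb_natCast_nonneg #S
  | succ n ih =>
    set A := headSlice S false
    set B := headSlice S true
    have h_inter : (#(A ∩ B) : ℝ) ≤ min (#A : ℝ) #B := by
      exact_mod_cast le_min (card_le_card inter_subset_left) (card_le_card inter_subset_right)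
    rw [card_hammingEdges_succ, card_eq_card_headSlice_add]
    push_cast
    linarith [ih A, ih B,
      mul_logb_add_mul_logb_add_two_mul_min_le (#A).cast_nonneg (#B).cast_nonneg]

theorem card_hammingEdges_univ : #(hammingEdges (univ : Finset (Fin n → Bool))) = n * 2 ^ n := by
  induction n with
  | zero => simp [hammingEdges_eq_empty]
  | succ n ih =>
    have h_slice (a : Bool) : headSlice (univ : Finset (Fin (n + 1) → Bool)) a = univ := by ext; simp
    rw [card_hammingEdges_succ, h_slice, h_slice, ih, inter_self, card_univ,
      Fintype.card_fun, Fintype.card_bool, Fintype.card_fin]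
    ring

end Hypercube

theorem hamming_distance_one_replication_lower_bound_general
    (b p q : ℕ)
    (R : Fin p → Finset (Fin b → Bool))
    (hsize : ∀ i, (R i).card ≤ q)
    (hcover : ∀ u v : Fin b → Bool, hammingDist u v = 1 →
      ∃ i, u ∈ R i ∧ v ∈ R i) :
    (∑ i, ((R i).card : ℝ)) / 2 ^ b ≥ (b : ℝ) / Real.logb 2 q := by
  have h_covered : hammingEdges univ ⊆ univ.biUnion fun i => hammingEdges (R i) := by
    intro e he
    simp only [hammingEdges, mem_filter_univ, mem_univ, true_and] at he
    obtain ⟨i, hu, hv⟩ := hcover e.1 e.2 he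
    exact mem_biUnion.2 ⟨i, mem_univ _, by simp [hammingEdges, hu, hv, he]⟩
  have h_reducer (i : Fin p) : (#(R i) : ℝ) * logb 2 #(R i) ≤ #(R i) * logb 2 q := by
    rcases (#(R i)).eq_zero_or_pos with h | h
    · simp [h]
    · gcongr
      · norm_num
      · exact_mod_cast hsize i
  have h_count : (b : ℝ) * 2 ^ b ≤ (∑ i, (#(R i) : ℝ)) * logb 2 q := by
    calc (b : ℝ) * 2 ^ b = #(hammingEdges (univ : Finset (Fin b → Bool))) := by
          rw [card_hammingEdges_univ]; push_cast; rfl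
      _ ≤ ∑ i, (#(hammingEdges (R i)) : ℝ) := by
          exact_mod_cast (card_le_card h_covered).trans card_biUnion_le
      _ ≤ ∑ i, (#(R i) : ℝ) * logb 2 q :=
          sum_le_sum fun i _ => (card_hammingEdges_le _).trans (h_reducer i)
      _ = (∑ i, (#(R i) : ℝ)) * logb 2 q := (sum_mul ..).symm
  rcases le_or_gt (logb 2 q) 0 with hq | hq
  · exact (div_nonpos_of_nonneg_of_nonpos b.cast_nonneg hq).trans (by positivity)
  · rw [ge_iff_le, div_le_div_iff₀ hq (by positivity)]
    linarith

/-- Lower bound on replication rate for the Hamming-distance-1 problem: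
if `p` reducers receive at most `q` strings each (`q ≥ 2`) and every pair of
`b`-bit strings at Hamming distance 1 shares some reducer, then the
replication rate `(Σᵢ qᵢ)/2^b` is at least `b / log₂ q`. -/
theorem hamming_distance_one_replication_lower_bound
    (b p q : ℕ) (hq : 2 ≤ q)
    (R : Fin p → Finset (Fin b → Bool))
    (hsize : ∀ i, (R i).card ≤ q)
    (hcover : ∀ u v : Fin b → Bool, hammingDist u v = 1 →
      ∃ i, u ∈ R i ∧ v ∈ R i) :
    (∑ i, ((R i).card : ℝ)) / 2 ^ b ≥ (b : ℝ) / Real.logb 2 q :=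
  hamming_distance_one_replication_lower_bound_general b p q R hsize hcover
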